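/- arXiv:0803.0123 — 3 statements merged into one kernel-verified Lean document; each statement's English description precedes it below -/
import Mathlib

section
/- Let R be a commutative ring, n a natural number, and A, B : Matrix (Fin n) (Fin n) R. Then det(A + B) = ∑_{S,T} ε(S,T) · det(A[S,T]) · det(B[Sᶜ,Tᶜ]), where the sum ranges over all pairs of subsets S, T ⊆ Fin n with |S| = |T|, A[S,T] denotes the square submatrix of A with rows indexed by S and columns indexed by T (each taken in increasing order, e.g., via Finset.orderEmbOfFin), B[Sᶜ,Tᶜ] denotes the square submatrix of B with rows indexed by the complement of S and columns indexed by the complement of T (in increasing order), and the sign is ε(S,T) = (−1)^{∑_{i∈S} i + ∑_{j∈T} j}. -/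
open Finset Equiv

namespace DetAddAux

variable {n k : ℕ}

lemma compl_card (S : Finset (Fin n)) (hS : S.card = k) : (Sᶜ).card = n - k := by
  simp [Finset.card_compl, hS]

/-- The equivalence `Fin k ⊕ Fin (n-k) ≃ Fin n` built from a finset `S` of card `k`:
first block enumerates `S` in increasing order, second block enumerates `Sᶜ`. -/
def eqv (S : Finset (Fin n)) (hS : S.card = k) : Fin k ⊕ Fin (n - k) ≃ Fin n :=
  (Equiv.sumCongr (S.orderIsoOfFin hS).toEquiv
      (((Sᶜ).orderIsoOfFin (compl_card S hS)).toEquiv.trans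
        (Equiv.subtypeEquivRight (fun x => Finset.mem_compl)))).trans
    (Equiv.sumCompl (· ∈ S))

@[simp] lemma eqv_inl (S : Finset (Fin n)) (hS : S.card = k) (j : Fin k) :
    eqv S hS (Sum.inl j) = S.orderEmbOfFin hS j := rfl

@[simp] lemma eqv_inr (S : Finset (Fin n)) (hS : S.card = k) (j : Fin (n - k)) :
    eqv S hS (Sum.inr j) = (Sᶜ).orderEmbOfFin (compl_card S hS) j := rfl

end DetAddAux

namespace DetAddAux
variable {n k : ℕ}

lemma insert_erase_card (s : Finset (Fin n)) {a b : Fin n}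
    (ha : a ∈ s) (hb : b ∉ s) : (insert b (s.erase a)).card = s.card := by
  rw [Finset.card_insert_of_notMem (fun h => hb (Finset.mem_of_mem_erase h)),
    Finset.card_erase_of_mem ha]
  have : 1 ≤ s.card := Finset.card_pos.2 ⟨a, ha⟩
  omega

lemma insert_erase_sum (s : Finset (Fin n)) {a b : Fin n}
    (hab : (b : ℕ) + 1 = (a : ℕ)) (ha : a ∈ s) (hb : b ∉ s) :
    (∑ i ∈ insert b (s.erase a), (i : ℕ)) + 1 = ∑ i ∈ s, (i : ℕ) := by
  rw [Finset.sum_insert (fun h => hb (Finset.mem_of_mem_erase h)),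
    ← Finset.add_sum_erase s _ ha]
  omega

lemma orderEmbOfFin_swap (s : Finset (Fin n)) {a b : Fin n}
    (hab : (b : ℕ) + 1 = (a : ℕ)) (ha : a ∈ s) (hb : b ∉ s) (h : s.card = k)
    (h' : (insert b (s.erase a)).card = k) (j : Fin k) :
    s.orderEmbOfFin h j = Equiv.swap b a ((insert b (s.erase a)).orderEmbOfFin h' j) := by
  have hba : b < a := by rw [Fin.lt_def]; omega
  have hne : b ≠ a := ne_of_lt hba
  have hmem : ∀ z : Fin k, ((insert b (s.erase a)).orderEmbOfFin h') z ≠ a ∧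
      (((insert b (s.erase a)).orderEmbOfFin h') z = b ∨
        (((insert b (s.erase a)).orderEmbOfFin h') z ∈ s ∧
          ((insert b (s.erase a)).orderEmbOfFin h') z ≠ b)) := by
    intro z
    rcases Finset.mem_insert.1 (Finset.orderEmbOfFin_mem _ h' z) with hx | hx
    · exact ⟨fun hc => hne (hx.symm.trans hc), Or.inl hx⟩
    · exact ⟨(Finset.mem_erase.1 hx).1,
        Or.inr ⟨Finset.mem_of_mem_erase hx, fun hc => hb (hc ▸ Finset.mem_of_mem_erase hx)⟩⟩
  have key : (fun j => Equiv.swap b a ((insert b (s.erase a)).orderEmbOfFin h' j))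
      = s.orderEmbOfFin h := by
    apply Finset.orderEmbOfFin_unique
    · intro x
      rcases (hmem x).2 with hx | hx
      · rw [hx, Equiv.swap_apply_left]; exact ha
      · rw [Equiv.swap_apply_of_ne_of_ne hx.2 (hmem x).1]; exact hx.1
    · intro x y hxy
      have hmono := ((insert b (s.erase a)).orderEmbOfFin h').strictMono hxy
      show Equiv.swap b a (((insert b (s.erase a)).orderEmbOfFin h') x) <
        Equiv.swap b a (((insert b (s.erase a)).orderEmbOfFin h') y)
      generalize hU : ((insert b (s.erase a)).orderEmbOfFin h') x = u at *
      generalize hV : ((insert b (s.erase a)).orderEmbOfFin h') y = v at *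
      have hua : u ≠ a := (hU ▸ (hmem x)).1
      have hva : v ≠ a := (hV ▸ (hmem y)).1
      by_cases hub : u = b
      · rw [hub, Equiv.swap_apply_left]
        have hvb : v ≠ b := fun hc => lt_irrefl u (by rw [hub, ← hc] at hmono ⊢; exact hmono)
        rw [Equiv.swap_apply_of_ne_of_ne hvb hva]
        rw [Fin.lt_def] at hmono ⊢
        have h1 := Fin.val_ne_of_ne hvb
        have h2 := Fin.val_ne_of_ne hva
        omega
      · rw [Equiv.swap_apply_of_ne_of_ne hub hua]
        by_cases hvb : v = b
        · rw [hvb, Equiv.swap_apply_left]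
          exact lt_trans (hvb ▸ hmono) hba
        · rw [Equiv.swap_apply_of_ne_of_ne hvb hva]; exact hmono
  exact (congrFun key j).symm

lemma compl_insert_erase (s : Finset (Fin n)) {a b : Fin n}
    (hab : (b : ℕ) + 1 = (a : ℕ)) (ha : a ∈ s) (hb : b ∉ s) :
    insert b (((insert b (s.erase a))ᶜ).erase a) = sᶜ := by
  have hne : b ≠ a := by intro h; rw [h] at hab; omega
  ext x
  simp only [Finset.mem_insert, Finset.mem_erase, Finset.mem_compl, Finset.mem_insert,
    Finset.mem_erase]
  by_cases hxa : x = a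
  · subst hxa; simp [hne.symm]; tauto
  · by_cases hxb : x = b
    · subst hxb; tauto
    · tauto

lemma mem_compl_insert_erase (s : Finset (Fin n)) {a b : Fin n}
    (hab : (b : ℕ) + 1 = (a : ℕ)) (ha : a ∈ s) (hb : b ∉ s) :
    a ∈ (insert b (s.erase a))ᶜ ∧ b ∉ (insert b (s.erase a))ᶜ := by
  have hne : b ≠ a := by intro h; rw [h] at hab; omega
  constructor
  · rw [Finset.mem_compl, Finset.mem_insert]
    rintro (h | h)
    · exact hne h.symm
    · exact (Finset.mem_erase.1 h).1 rfl
  · rw [Finset.mem_compl]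
    exact fun hc => hc (Finset.mem_insert_self b _)

end DetAddAux

namespace DetAddAux
variable {n k : ℕ}

lemma orderEmbOfFin_congr {α : Type*} [LinearOrder α] {s t : Finset α} (hst : s = t)
    {m : ℕ} (hs : s.card = m) (ht : t.card = m) (j : Fin m) :
    s.orderEmbOfFin hs j = t.orderEmbOfFin ht j := by subst hst; rfl

lemma eqv_swap (S : Finset (Fin n)) {a b : Fin n}
    (hab : (b : ℕ) + 1 = (a : ℕ)) (ha : a ∈ S) (hb : b ∉ S) (hS : S.card = k)
    (hS' : (insert b (S.erase a)).card = k) (z : Fin k ⊕ Fin (n - k)) :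
    eqv S hS z = Equiv.swap b a (eqv (insert b (S.erase a)) hS' z) := by
  obtain ⟨haC, hbC⟩ := mem_compl_insert_erase S hab ha hb
  cases z with
  | inl j => exact orderEmbOfFin_swap S hab ha hb hS hS' j
  | inr j =>
    show (Sᶜ).orderEmbOfFin (compl_card S hS) j
      = Equiv.swap b a (((insert b (S.erase a))ᶜ).orderEmbOfFin (compl_card _ hS') j)
    have hcard : (insert b (((insert b (S.erase a))ᶜ).erase a)).card = n - k := by
      rw [compl_insert_erase S hab ha hb]; exact compl_card S hS
    have key := orderEmbOfFin_swap ((insert b (S.erase a))ᶜ) hab haC hbC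
      (compl_card _ hS') hcard j
    rw [key, Equiv.swap_apply_self]
    exact (orderEmbOfFin_congr (compl_insert_erase S hab ha hb) hcard (compl_card S hS) j).symm

end DetAddAux

namespace DetAddAux
variable {n k : ℕ}

def Droppable (S : Finset (Fin n)) : Prop :=
  ∃ a ∈ S, ∃ b : Fin n, (b : ℕ) + 1 = (a : ℕ) ∧ b ∉ S

lemma downClosed {S : Finset (Fin n)} (h : ¬ Droppable S) :
    ∀ m : ℕ, ∀ a ∈ S, (a : ℕ) ≤ m → ∀ c : Fin n, c ≤ a → c ∈ S := by
  intro m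
  induction m with
  | zero =>
    intro a haS ha0 c hca
    have : c = a := by apply Fin.ext; rw [Fin.le_def] at hca; omega
    exact this ▸ haS
  | succ m ih =>
    intro a haS ham c hca
    rcases eq_or_lt_of_le hca with rfl | hlt
    · exact haS
    · have hapos : 0 < (a : ℕ) := by rw [Fin.lt_def] at hlt; omega
      have hb : (a : ℕ) - 1 < n := by have := a.isLt; omega
      set b : Fin n := ⟨(a : ℕ) - 1, hb⟩ with hbdef
      have hbS : b ∈ S := by
        by_contra hbS
        exact h ⟨a, haS, b, by simp [hbdef]; omega, hbS⟩
      exact ih b hbS (by simp [hbdef]; omega) c (by rw [Fin.le_def] at hca ⊢; simp [hbdef]; omega)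

lemma eq_of_nondrop {S T : Finset (Fin n)} (hS : ¬ Droppable S) (hT : ¬ Droppable T)
    (hcard : S.card = T.card) : S = T := by
  have key : ∀ (U V : Finset (Fin n)), ¬ Droppable U → ¬ Droppable V → U.card = V.card →
      U ⊆ V := by
    intro U V hU hV hc a haU
    by_contra haV
    have hTsub : V ⊆ U.erase a := by
      intro x hxV
      have hxa : x < a := by
        by_contra hge
        push_neg at hge
        exact haV (downClosed hV (x : ℕ) x hxV le_rfl a hge)
      exact Finset.mem_erase.2 ⟨ne_of_lt hxa,
        downClosed hU (a : ℕ) a haU le_rfl x (le_of_lt hxa)⟩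
    have h1 := Finset.card_le_card hTsub
    have h2 := Finset.card_erase_of_mem haU
    have h3 : 1 ≤ U.card := Finset.card_pos.2 ⟨a, haU⟩
    omega
  exact Finset.Subset.antisymm (key S T hS hT hcard) (key T S hT hS hcard.symm)

lemma sum_pos_of_mem {S : Finset (Fin n)} {a : Fin n} (ha : a ∈ S) :
    (a : ℕ) ≤ ∑ i ∈ S, (i : ℕ) :=
  Finset.single_le_sum (fun i _ => Nat.zero_le _) ha

lemma sign_eqv_trans : ∀ N : ℕ, ∀ (S T : Finset (Fin n)) (hS : S.card = k) (hT : T.card = k),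
    (∑ i ∈ S, (i : ℕ)) + (∑ i ∈ T, (i : ℕ)) = N →
    Equiv.Perm.sign ((eqv T hT).symm.trans (eqv S hS)) = (-1) ^ N := by
  intro N
  induction N using Nat.strong_induction_on with
  | _ N ih =>
    intro S T hS hT hsum
    by_cases hdS : Droppable S
    · obtain ⟨a, ha, b, hab, hb⟩ := hdS
      have hne : b ≠ a := fun hc => by rw [hc] at hab; omega
      have hS'card : (insert b (S.erase a)).card = k := (insert_erase_card S ha hb).trans hS
      have hperm : (eqv T hT).symm.trans (eqv S hS)
          = Equiv.swap b a * ((eqv T hT).symm.trans (eqv (insert b (S.erase a)) hS'card)) := by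
        refine Equiv.ext fun x => ?_
        exact eqv_swap S hab ha hb hS hS'card ((eqv T hT).symm x)
      have hpos : 1 ≤ N := by
        have h1 := sum_pos_of_mem ha
        omega
      have hsum' : (∑ i ∈ insert b (S.erase a), (i : ℕ)) + (∑ i ∈ T, (i : ℕ)) = N - 1 := by
        have := insert_erase_sum S hab ha hb
        omega
      rw [hperm, map_mul, Equiv.Perm.sign_swap hne,
        ih (N - 1) (by omega) _ T hS'card hT hsum']
      have hN : N - 1 + 1 = N := by omega
      have hpow : (-1 : ℤˣ) ^ N = (-1) ^ (N - 1) * (-1) := by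
        conv_lhs => rw [← hN]
        rw [pow_succ]
      rw [hpow]
      exact mul_comm _ _
    · by_cases hdT : Droppable T
      · obtain ⟨a, ha, b, hab, hb⟩ := hdT
        have hne : b ≠ a := fun hc => by rw [hc] at hab; omega
        have hT'card : (insert b (T.erase a)).card = k := (insert_erase_card T ha hb).trans hT
        have hperm : (eqv T hT).symm.trans (eqv S hS)
            = ((eqv (insert b (T.erase a)) hT'card).symm.trans (eqv S hS)) * Equiv.swap b a := by
          refine Equiv.ext fun x => ?_
          show eqv S hS ((eqv T hT).symm x)
            = eqv S hS ((eqv (insert b (T.erase a)) hT'card).symm (Equiv.swap b a x))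
          congr 1
          have h1 : ∀ z, Equiv.swap b a (eqv T hT z)
              = eqv (insert b (T.erase a)) hT'card z := by
            intro z
            rw [eqv_swap T hab ha hb hT hT'card z, Equiv.swap_apply_self]
          apply (eqv (insert b (T.erase a)) hT'card).injective
          rw [Equiv.apply_symm_apply, ← h1 ((eqv T hT).symm x), Equiv.apply_symm_apply]
        have hpos : 1 ≤ N := by
          have h1 := sum_pos_of_mem ha
          omega
        have hsum' : (∑ i ∈ S, (i : ℕ)) + (∑ i ∈ insert b (T.erase a), (i : ℕ)) = N - 1 := by
          have := insert_erase_sum T hab ha hb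
          omega
        rw [hperm, map_mul, Equiv.Perm.sign_swap hne,
          ih (N - 1) (by omega) S _ hS hT'card hsum']
        have hN : N - 1 + 1 = N := by omega
        have hpow : (-1 : ℤˣ) ^ N = (-1) ^ (N - 1) * (-1) := by
          conv_lhs => rw [← hN]
          rw [pow_succ]
        rw [hpow]
      · have hST : S = T := eq_of_nondrop hdS hdT (hS.trans hT.symm)
        subst hST
        have hPr : hS = hT := Subsingleton.elim _ _
        subst hPr
        rw [Equiv.symm_trans_self, Equiv.Perm.sign_refl]
        obtain ⟨m, hm⟩ : Even N := ⟨∑ i ∈ S, (i : ℕ), by omega⟩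
        rw [hm, pow_add]
        exact (Int.units_mul_self _).symm

end DetAddAux

namespace DetAddAux
variable {n k : ℕ}

open Equiv.Perm

/-- The permutation of `Fin n` built from a pair of permutations of the blocks. -/
def phi (S T : Finset (Fin n)) (hS : S.card = k) (hT : T.card = k)
    (π : Equiv.Perm (Fin k)) (ρ : Equiv.Perm (Fin (n - k))) : Equiv.Perm (Fin n) :=
  (eqv T hT).symm.trans ((Equiv.sumCongr π ρ).trans (eqv S hS))

lemma eqv_symm_emb (S : Finset (Fin n)) (hS : S.card = k) (j : Fin k) :
    (eqv S hS).symm (S.orderEmbOfFin hS j) = Sum.inl j := by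
  rw [← eqv_inl S hS j, Equiv.symm_apply_apply]

lemma eqv_symm_emb_compl (S : Finset (Fin n)) (hS : S.card = k) (j : Fin (n - k)) :
    (eqv S hS).symm ((Sᶜ).orderEmbOfFin (compl_card S hS) j) = Sum.inr j := by
  rw [← eqv_inr S hS j, Equiv.symm_apply_apply]

lemma phi_apply_emb (S T : Finset (Fin n)) (hS : S.card = k) (hT : T.card = k)
    (π : Equiv.Perm (Fin k)) (ρ : Equiv.Perm (Fin (n - k))) (j : Fin k) :
    phi S T hS hT π ρ (T.orderEmbOfFin hT j) = S.orderEmbOfFin hS (π j) := by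
  show eqv S hS ((Equiv.sumCongr π ρ) ((eqv T hT).symm (T.orderEmbOfFin hT j)))
    = S.orderEmbOfFin hS (π j)
  rw [eqv_symm_emb, Equiv.sumCongr_apply, Sum.map_inl, eqv_inl]

lemma phi_apply_emb_compl (S T : Finset (Fin n)) (hS : S.card = k) (hT : T.card = k)
    (π : Equiv.Perm (Fin k)) (ρ : Equiv.Perm (Fin (n - k))) (j : Fin (n - k)) :
    phi S T hS hT π ρ ((Tᶜ).orderEmbOfFin (compl_card T hT) j)
      = (Sᶜ).orderEmbOfFin (compl_card S hS) (ρ j) := by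
  show eqv S hS ((Equiv.sumCongr π ρ) ((eqv T hT).symm ((Tᶜ).orderEmbOfFin (compl_card T hT) j)))
    = (Sᶜ).orderEmbOfFin (compl_card S hS) (ρ j)
  rw [eqv_symm_emb_compl, Equiv.sumCongr_apply, Sum.map_inr, eqv_inr]

lemma sign_phi (S T : Finset (Fin n)) (hS : S.card = k) (hT : T.card = k)
    (π : Equiv.Perm (Fin k)) (ρ : Equiv.Perm (Fin (n - k))) :
    sign (phi S T hS hT π ρ)
      = sign ((eqv T hT).symm.trans (eqv S hS)) * sign π * sign ρ := by
  have hdec : phi S T hS hT π ρ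
      = ((eqv T hT).symm.trans (eqv S hS)) * ((eqv T hT).permCongr (Equiv.sumCongr π ρ)) := by
    refine Equiv.ext fun x => ?_
    show eqv S hS ((Equiv.sumCongr π ρ) ((eqv T hT).symm x))
      = eqv S hS ((eqv T hT).symm (eqv T hT ((Equiv.sumCongr π ρ) ((eqv T hT).symm x))))
    rw [Equiv.symm_apply_apply]
  rw [hdec, map_mul, Equiv.Perm.sign_permCongr, Equiv.Perm.sign_sumCongr, mul_assoc]

lemma image_phi (S T : Finset (Fin n)) (hS : S.card = k) (hT : T.card = k)
    (π : Equiv.Perm (Fin k)) (ρ : Equiv.Perm (Fin (n - k))) :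
    T.image (phi S T hS hT π ρ) = S := by
  apply Finset.eq_of_subset_of_card_le
  · intro x hx
    obtain ⟨t, ht, rfl⟩ := Finset.mem_image.1 hx
    obtain ⟨j, rfl⟩ : ∃ j, T.orderEmbOfFin hT j = t := by
      have : t ∈ Set.range (T.orderEmbOfFin hT) := by
        rw [Finset.range_orderEmbOfFin]; exact ht
      exact this
    rw [phi_apply_emb]
    exact Finset.orderEmbOfFin_mem S hS _
  · rw [Finset.card_image_of_injective _ (phi S T hS hT π ρ).injective, hS, hT]

lemma mem_iff_of_image {S T : Finset (Fin n)} {σ : Equiv.Perm (Fin n)}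
    (himg : T.image σ = S) : ∀ x : Fin n, x ∈ T ↔ σ x ∈ S := by
  intro x
  rw [← himg, Finset.mem_image]
  constructor
  · exact fun h => ⟨x, h, rfl⟩
  · rintro ⟨y, hy, hxy⟩
    rwa [← σ.injective hxy]

lemma mem_iff_of_image_compl {S T : Finset (Fin n)} {σ : Equiv.Perm (Fin n)}
    (himg : T.image σ = S) : ∀ x : Fin n, x ∈ Tᶜ ↔ σ x ∈ Sᶜ := by
  intro x
  rw [Finset.mem_compl, Finset.mem_compl]
  exact not_congr (mem_iff_of_image himg x)

/-- The block permutation on `S` induced by `σ` with `σ '' T = S`. -/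
def piOf (S T : Finset (Fin n)) (hS : S.card = k) (hT : T.card = k)
    (σ : Equiv.Perm (Fin n)) (himg : T.image σ = S) : Equiv.Perm (Fin k) :=
  (T.orderIsoOfFin hT).toEquiv.trans
    ((σ.subtypeEquiv (mem_iff_of_image himg)).trans (S.orderIsoOfFin hS).toEquiv.symm)

def rhoOf (S T : Finset (Fin n)) (hS : S.card = k) (hT : T.card = k)
    (σ : Equiv.Perm (Fin n)) (himg : T.image σ = S) : Equiv.Perm (Fin (n - k)) :=
  ((Tᶜ).orderIsoOfFin (compl_card T hT)).toEquiv.trans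
    ((σ.subtypeEquiv (mem_iff_of_image_compl himg)).trans
      ((Sᶜ).orderIsoOfFin (compl_card S hS)).toEquiv.symm)

lemma piOf_spec (S T : Finset (Fin n)) (hS : S.card = k) (hT : T.card = k)
    (σ : Equiv.Perm (Fin n)) (himg : T.image σ = S) (j : Fin k) :
    S.orderEmbOfFin hS (piOf S T hS hT σ himg j) = σ (T.orderEmbOfFin hT j) := by
  rw [← Finset.coe_orderIsoOfFin_apply]
  simp [piOf]

lemma rhoOf_spec (S T : Finset (Fin n)) (hS : S.card = k) (hT : T.card = k)
    (σ : Equiv.Perm (Fin n)) (himg : T.image σ = S) (j : Fin (n - k)) :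
    (Sᶜ).orderEmbOfFin (compl_card S hS) (rhoOf S T hS hT σ himg j)
      = σ ((Tᶜ).orderEmbOfFin (compl_card T hT) j) := by
  rw [← Finset.coe_orderIsoOfFin_apply]
  simp [rhoOf]

lemma phi_piOf_rhoOf (S T : Finset (Fin n)) (hS : S.card = k) (hT : T.card = k)
    (σ : Equiv.Perm (Fin n)) (himg : T.image σ = S) :
    phi S T hS hT (piOf S T hS hT σ himg) (rhoOf S T hS hT σ himg) = σ := by
  refine Equiv.ext fun x => ?_
  by_cases hx : x ∈ T
  · obtain ⟨j, rfl⟩ : ∃ j, T.orderEmbOfFin hT j = x := by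
      have : x ∈ Set.range (T.orderEmbOfFin hT) := by
        rw [Finset.range_orderEmbOfFin]; exact hx
      exact this
    rw [phi_apply_emb, piOf_spec]
  · obtain ⟨j, rfl⟩ : ∃ j, (Tᶜ).orderEmbOfFin (compl_card T hT) j = x := by
      have : x ∈ Set.range ((Tᶜ).orderEmbOfFin (compl_card T hT)) := by
        rw [Finset.range_orderEmbOfFin]; exact Finset.mem_compl.2 hx
      exact this
    rw [phi_apply_emb_compl, rhoOf_spec]

lemma piOf_phi (S T : Finset (Fin n)) (hS : S.card = k) (hT : T.card = k)
    (π : Equiv.Perm (Fin k)) (ρ : Equiv.Perm (Fin (n - k)))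
    (himg : T.image (phi S T hS hT π ρ) = S) :
    piOf S T hS hT (phi S T hS hT π ρ) himg = π := by
  refine Equiv.ext fun j => ?_
  apply (S.orderEmbOfFin hS).injective
  rw [piOf_spec, phi_apply_emb]

lemma rhoOf_phi (S T : Finset (Fin n)) (hS : S.card = k) (hT : T.card = k)
    (π : Equiv.Perm (Fin k)) (ρ : Equiv.Perm (Fin (n - k)))
    (himg : T.image (phi S T hS hT π ρ) = S) :
    rhoOf S T hS hT (phi S T hS hT π ρ) himg = ρ := by
  refine Equiv.ext fun j => ?_
  apply ((Sᶜ).orderEmbOfFin (compl_card S hS)).injective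
  rw [rhoOf_spec, phi_apply_emb_compl]

lemma prod_emb {M : Type*} [CommMonoid M] {m : ℕ} (S : Finset (Fin n)) (hS : S.card = m)
    (f : Fin n → M) : ∏ j : Fin m, f (S.orderEmbOfFin hS j) = ∏ i ∈ S, f i := by
  refine Finset.prod_nbij (S.orderEmbOfFin hS) (fun j _ => Finset.orderEmbOfFin_mem S hS j)
    (fun a _ b _ hab => (S.orderEmbOfFin hS).injective hab) ?_ (fun _ _ => rfl)
  intro x hx
  obtain ⟨j, rfl⟩ : ∃ j, S.orderEmbOfFin hS j = x := by
    have : x ∈ Set.range (S.orderEmbOfFin hS) := by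
      rw [Finset.range_orderEmbOfFin]; exact hx
    exact this
  exact Set.mem_image_of_mem _ (Finset.mem_coe.2 (Finset.mem_univ j))

end DetAddAux

namespace DetAddAux
variable {n k : ℕ} {R : Type*} [CommRing R]

open Equiv.Perm

lemma fiber_sum (A B : Matrix (Fin n) (Fin n) R) (S T : Finset (Fin n))
    (hS : S.card = k) (hT : T.card = k) :
    ∑ σ ∈ Finset.univ.filter (fun σ : Equiv.Perm (Fin n) => T.image σ = S),
        ((sign σ : ℤ) : R) * ((∏ i ∈ T, A (σ i) i) * ∏ i ∈ Tᶜ, B (σ i) i)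
      = ((sign ((eqv T hT).symm.trans (eqv S hS)) : ℤ) : R)
          * (A.submatrix (S.orderEmbOfFin hS) (T.orderEmbOfFin hT)).det
          * (B.submatrix ((Sᶜ).orderEmbOfFin (compl_card S hS))
              ((Tᶜ).orderEmbOfFin (compl_card T hT))).det := by
  have main : ∑ σ ∈ Finset.univ.filter (fun σ : Equiv.Perm (Fin n) => T.image σ = S),
        ((sign σ : ℤ) : R) * ((∏ i ∈ T, A (σ i) i) * ∏ i ∈ Tᶜ, B (σ i) i)
      = ∑ p : Equiv.Perm (Fin k) × Equiv.Perm (Fin (n - k)),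
          (((sign ((eqv T hT).symm.trans (eqv S hS)) * sign p.1 * sign p.2 : ℤˣ) : ℤ) : R)
            * ((∏ j : Fin k,
                  (A.submatrix (S.orderEmbOfFin hS) (T.orderEmbOfFin hT)) (p.1 j) j)
              * ∏ j : Fin (n - k),
                  (B.submatrix ((Sᶜ).orderEmbOfFin (compl_card S hS))
                    ((Tᶜ).orderEmbOfFin (compl_card T hT))) (p.2 j) j) := by
    refine Finset.sum_bij'
      (fun σ hσ => (piOf S T hS hT σ (Finset.mem_filter.1 hσ).2,
        rhoOf S T hS hT σ (Finset.mem_filter.1 hσ).2))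
      (fun p _ => phi S T hS hT p.1 p.2) (fun σ hσ => Finset.mem_univ _)
      (fun p hp => Finset.mem_filter.2 ⟨Finset.mem_univ _, image_phi S T hS hT p.1 p.2⟩)
      (fun σ hσ => phi_piOf_rhoOf S T hS hT σ (Finset.mem_filter.1 hσ).2)
      (fun p hp => Prod.ext (piOf_phi S T hS hT p.1 p.2 (image_phi S T hS hT p.1 p.2)) (rhoOf_phi S T hS hT p.1 p.2 (image_phi S T hS hT p.1 p.2)))
      ?_
    intro σ hσ
    have himg := (Finset.mem_filter.1 hσ).2
    conv_lhs => rw [← phi_piOf_rhoOf S T hS hT σ himg]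
    rw [sign_phi, ← prod_emb T hT (fun i => A (phi S T hS hT (piOf S T hS hT σ himg)
        (rhoOf S T hS hT σ himg) i) i),
      ← prod_emb (Tᶜ) (compl_card T hT) (fun i => B (phi S T hS hT (piOf S T hS hT σ himg)
        (rhoOf S T hS hT σ himg) i) i)]
    simp_rw [phi_apply_emb, phi_apply_emb_compl]
    rfl
  rw [main, Fintype.sum_prod_type, Matrix.det_apply', Matrix.det_apply']
  rw [mul_assoc, Finset.sum_mul_sum, Finset.mul_sum]
  refine Finset.sum_congr rfl fun π _ => ?_
  rw [Finset.mul_sum]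
  refine Finset.sum_congr rfl fun ρ _ => ?_
  simp only [Units.val_mul, Int.cast_mul, Matrix.submatrix_apply]
  ring

end DetAddAux

namespace DetAddAux
variable {n : ℕ} {R : Type*} [CommRing R]

lemma det_submatrix_index_congr {m m' : ℕ} (h : m = m') (s t : Finset (Fin n))
    (hs : s.card = m) (hs' : s.card = m') (ht : t.card = m) (ht' : t.card = m')
    (M : Matrix (Fin n) (Fin n) R) :
    (M.submatrix (s.orderEmbOfFin hs) (t.orderEmbOfFin ht)).det
      = (M.submatrix (s.orderEmbOfFin hs') (t.orderEmbOfFin ht')).det := by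
  subst h; rfl

end DetAddAux

open DetAddAux Equiv.Perm in
private theorem det_add_eq_sum_minors_aux {R : Type*} [CommRing R] (n : ℕ)
    (A B : Matrix (Fin n) (Fin n) R) :
    (A + B).det =
      ∑ S : Finset (Fin n), ∑ T : Finset (Fin n),
        if h : S.card = T.card then
          ((-1 : R) ^ ((∑ i ∈ S, (i : ℕ)) + ∑ j ∈ T, (j : ℕ))) *
            (A.submatrix (S.orderEmbOfFin rfl) (T.orderEmbOfFin h.symm)).det *
            (B.submatrix ((Sᶜ).orderEmbOfFin rfl)
              ((Tᶜ).orderEmbOfFin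
                (by rw [Finset.card_compl, Finset.card_compl, h]))).det
        else 0 := by
  classical
  rw [Matrix.det_apply']
  have step1 : ∀ σ : Equiv.Perm (Fin n), ∏ i, (A + B) (σ i) i
      = ∑ T : Finset (Fin n), (∏ i ∈ T, A (σ i) i) * ∏ i ∈ Tᶜ, B (σ i) i := by
    intro σ
    simp_rw [Matrix.add_apply]
    rw [Finset.prod_add, Finset.powerset_univ]
    exact Finset.sum_congr rfl fun T _ => by rw [Finset.compl_eq_univ_sdiff]
  simp_rw [step1, Finset.mul_sum]
  rw [Finset.sum_comm]
  have step2 : ∀ T : Finset (Fin n),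
      (∑ σ : Equiv.Perm (Fin n), ((sign σ : ℤ) : R)
          * ((∏ i ∈ T, A (σ i) i) * ∏ i ∈ Tᶜ, B (σ i) i))
        = ∑ S : Finset (Fin n),
            ∑ σ ∈ Finset.univ.filter (fun σ : Equiv.Perm (Fin n) => T.image σ = S),
              ((sign σ : ℤ) : R) * ((∏ i ∈ T, A (σ i) i) * ∏ i ∈ Tᶜ, B (σ i) i) :=
    fun T => (Finset.sum_fiberwise_of_maps_to (fun σ _ => Finset.mem_univ _) _).symm
  simp_rw [step2]
  rw [Finset.sum_comm]
  refine Finset.sum_congr rfl fun S _ => Finset.sum_congr rfl fun T _ => ?_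
  by_cases h : S.card = T.card
  · rw [dif_pos h]
    rw [fiber_sum A B S T (rfl : S.card = S.card) h.symm]
    rw [sign_eqv_trans ((∑ i ∈ S, (i : ℕ)) + ∑ j ∈ T, (j : ℕ)) S T rfl h.symm rfl]
    have hcast : ∀ N : ℕ, ((((-1 : ℤˣ) ^ N : ℤˣ) : ℤ) : R) = (-1 : R) ^ N := by
      intro N
      rw [Units.val_pow_eq_pow_val, Int.cast_pow]
      norm_num
    rw [hcast]
    congr 1
    exact det_submatrix_index_congr (by rw [Finset.card_compl, Fintype.card_fin]) (Sᶜ) (Tᶜ)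
      (compl_card S rfl) rfl (compl_card T h.symm)
      (by rw [Finset.card_compl, Finset.card_compl, h]) B
  · rw [dif_neg h]
    have hempty : Finset.univ.filter (fun σ : Equiv.Perm (Fin n) => T.image σ = S) = ∅ :=
      Finset.filter_eq_empty_iff.2 fun σ _ himg =>
        h (by rw [← himg, Finset.card_image_of_injective _ σ.injective])
    rw [hempty, Finset.sum_empty]

/-- Determinant of a sum of matrices (the paper's Lemma): `det (A + B)` is the
sum over all pairs of subsets `S, T ⊆ Fin n` of equal cardinality of the sign
`(-1) ^ (∑_{i ∈ S} i + ∑_{j ∈ T} j)` times the minor of `A` on rows `S` and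
columns `T` times the complementary minor of `B` on rows `Sᶜ` and columns `Tᶜ`
(rows and columns taken in increasing order). -/
theorem det_add_eq_sum_minors {R : Type*} [CommRing R] (n : ℕ)
    (A B : Matrix (Fin n) (Fin n) R) :
    (A + B).det =
      ∑ S : Finset (Fin n), ∑ T : Finset (Fin n),
        if h : S.card = T.card then
          ((-1 : R) ^ ((∑ i ∈ S, (i : ℕ)) + ∑ j ∈ T, (j : ℕ))) *
            (A.submatrix (S.orderEmbOfFin rfl) (T.orderEmbOfFin h.symm)).det *
            (B.submatrix ((Sᶜ).orderEmbOfFin rfl)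
              ((Tᶜ).orderEmbOfFin
                (by rw [Finset.card_compl, Finset.card_compl, h]))).det
        else 0 := by
  exact det_add_eq_sum_minors_aux n A B
end

section
/- Let ι be an index type, let x : ι → ℝ³ be a family of points whose affine span is all of ℝ³ (affineSpan ℝ (Set.range x) = ⊤), and let v : ι → ℝ³ be a family of vectors satisfying ⟪x i − x j, v i − v j⟫ = 0 for all i, j ∈ ι. Then there exist vectors a, ω ∈ ℝ³ such that v i = a + ω × (x i) for every i ∈ ι, where × denotes the cross product. -/
/-!
Fix a base point `x i₀` and put `y i = x i - x i₀`, `w i = v i - v i₀`. The hypothesis makes the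
pairing `⟪y i, w j⟫` antisymmetric in `i, j`. Since the `y i` span the space, antisymmetry forces
every linear relation among the `y i` to hold among the `w i` (if `∑ c i • y i = 0`, then
`∑ c i • w i` is orthogonal to every `y j`), so `y i ↦ w i` extends to a linear map `A`, which is
again skew: `⟪A z, z'⟫ = -⟪z, A z'⟫`. A skew endomorphism of `ℝ³` is `u ↦ ω × u`, with `ω` read
off from its off-diagonal matrix entries.
-/

open scoped RealInnerProductSpace

/-- The cross product on Euclidean 3-space. -/
noncomputable def cross3 (u v : EuclideanSpace ℝ (Fin 3)) : EuclideanSpace ℝ (Fin 3) :=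
  (WithLp.equiv 2 (Fin 3 → ℝ)).symm
    (crossProduct ((WithLp.equiv 2 (Fin 3 → ℝ)) u) ((WithLp.equiv 2 (Fin 3 → ℝ)) v))

section Antisymmetric

variable {E ι : Type*} [NormedAddCommGroup E] [InnerProductSpace ℝ E] {y w : ι → E}

theorem inner_sub_sub_eq_neg_of_forall_inner_sub_sub_eq_zero {x v : ι → E}
    (hv : ∀ i j, ⟪x i - x j, v i - v j⟫ = 0) (i₀ i j : ι) :
    ⟪x i - x i₀, v j - v i₀⟫ = -⟪x j - x i₀, v i - v i₀⟫ := by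
  have hij : ⟪(x i - x i₀) - (x j - x i₀), (v i - v i₀) - (v j - v i₀)⟫ = 0 := by
    simpa only [sub_sub_sub_cancel_right] using hv i j
  have hi := hv i i₀
  have hj := hv j i₀
  generalize x i - x i₀ = a, x j - x i₀ = b, v i - v i₀ = p, v j - v i₀ = q at *
  rw [inner_sub_left, inner_sub_right, inner_sub_right, hi, hj] at hij
  linarith

theorem inner_linearCombination_eq_neg (h : ∀ i j, ⟪y i, w j⟫ = -⟪y j, w i⟫)
    (c c' : ι →₀ ℝ) :
    ⟪Finsupp.linearCombination ℝ y c, Finsupp.linearCombination ℝ w c'⟫ =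
      -⟪Finsupp.linearCombination ℝ y c', Finsupp.linearCombination ℝ w c⟫ := by
  simp only [Finsupp.linearCombination_apply, Finsupp.sum_inner, Finsupp.inner_sum,
    real_inner_smul_left, real_inner_smul_right]
  rw [Finsupp.sum_comm]
  simp only [Finsupp.sum, ← Finset.sum_neg_distrib]
  refine Finset.sum_congr rfl fun i _ => Finset.sum_congr rfl fun j _ => ?_
  rw [h]
  ring

theorem exists_linearMap_apply_eq_of_inner_eq_neg
    (hspan : Submodule.span ℝ (Set.range y) = ⊤) (h : ∀ i j, ⟪y i, w j⟫ = -⟪y j, w i⟫) :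
    ∃ A : E →ₗ[ℝ] E, (∀ i, A (y i) = w i) ∧ ∀ z z', ⟪A z, z'⟫ = -⟪z, A z'⟫ := by
  have hsurj : LinearMap.range (Finsupp.linearCombination ℝ y) = ⊤ := by
    rw [Finsupp.range_linearCombination, hspan]
  obtain ⟨g, hg⟩ := (Finsupp.linearCombination ℝ y).exists_rightInverse_of_surjective hsurj
  have hyg (z : E) : Finsupp.linearCombination ℝ y (g z) = z := LinearMap.congr_fun hg z
  have hker (c : ι →₀ ℝ) (hc : Finsupp.linearCombination ℝ y c = 0) :
      Finsupp.linearCombination ℝ w c = 0 := by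
    have := inner_linearCombination_eq_neg h (g (Finsupp.linearCombination ℝ w c)) c
    rwa [hyg, hc, inner_zero_left, neg_zero, inner_self_eq_zero] at this
  refine ⟨Finsupp.linearCombination ℝ w ∘ₗ g, fun i => ?_, fun z z' => ?_⟩
  · have := hker (g (y i) - Finsupp.single i 1) (by simp [hyg])
    simpa [sub_eq_zero] using this
  · have := inner_linearCombination_eq_neg h (g z') (g z)
    rw [hyg, hyg, real_inner_comm] at this
    simpa using this

end Antisymmetric

theorem cross3_sub (ω p q : EuclideanSpace ℝ (Fin 3)) :
    cross3 ω (p - q) = cross3 ω p - cross3 ω q := by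
  simp [cross3]

theorem cross3_apply (ω u : EuclideanSpace ℝ (Fin 3)) :
    cross3 ω u = (WithLp.equiv 2 (Fin 3 → ℝ)).symm
      ![ω 1 * u 2 - ω 2 * u 1, ω 2 * u 0 - ω 0 * u 2, ω 0 * u 1 - ω 1 * u 0] := by
  simp only [cross3, cross_apply]
  rfl

theorem exists_cross3_eq_of_inner_eq_neg
    (A : EuclideanSpace ℝ (Fin 3) →ₗ[ℝ] EuclideanSpace ℝ (Fin 3))
    (hA : ∀ z z', ⟪A z, z'⟫ = -⟪z, A z'⟫) : ∃ ω, ∀ u, A u = cross3 ω u := by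
  set e : Fin 3 → EuclideanSpace ℝ (Fin 3) := fun k => EuclideanSpace.single k 1
  have hM (k l : Fin 3) : A (e k) l = -A (e l) k := by
    simpa [e, EuclideanSpace.inner_single_left, EuclideanSpace.inner_single_right]
      using hA (e k) (e l)
  have hrow (u : EuclideanSpace ℝ (Fin 3)) (k : Fin 3) :
      A u k = -(A (e k) 0 * u 0 + A (e k) 1 * u 1 + A (e k) 2 * u 2) := by
    have := hA (e k) u
    rw [EuclideanSpace.inner_single_left, PiLp.inner_apply, Fin.sum_univ_three] at this
    simp only [RCLike.inner_apply, conj_trivial, map_one, one_mul] at this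
    linarith
  refine ⟨(WithLp.equiv 2 (Fin 3 → ℝ)).symm ![A (e 1) 2, A (e 2) 0, A (e 0) 1], fun u => ?_⟩
  have hdiag (k : Fin 3) : A (e k) k = 0 := by linarith [hM k k]
  ext k
  fin_cases k <;>
    simp only [cross3_apply, WithLp.equiv_symm_apply, hrow u, hdiag, hM 0 2, hM 1 0, hM 2 1,
      Fin.isValue, Fin.zero_eta, Fin.mk_one, Fin.reduceFinMk, Matrix.cons_val] <;> ring

/-- Any assignment of velocities to a family of points affinely spanning
Euclidean 3-space that preserves all pairwise distances to first order comes
from an infinitesimal motion of the whole space: `v i = a + ω × x i`. -/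
theorem exists_euclidean_motion_of_isometric_velocities
    {ι : Type*} (x : ι → EuclideanSpace ℝ (Fin 3))
    (hx : affineSpan ℝ (Set.range x) = ⊤)
    (v : ι → EuclideanSpace ℝ (Fin 3))
    (hv : ∀ i j, ⟪x i - x j, v i - v j⟫ = 0) :
    ∃ a ω : EuclideanSpace ℝ (Fin 3), ∀ i, v i = a + cross3 ω (x i) := by
  rcases isEmpty_or_nonempty ι with hι | ⟨⟨i₀⟩⟩
  · exact ⟨0, 0, hι.elim⟩
  have hspan : Submodule.span ℝ (Set.range fun i => x i - x i₀) = ⊤ := by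
    have := vectorSpan_range_eq_span_range_vsub_right ℝ x i₀
    rwa [← direction_affineSpan, hx, AffineSubspace.direction_top, eq_comm] at this
  obtain ⟨A, hAx, hA⟩ := exists_linearMap_apply_eq_of_inner_eq_neg hspan
    (inner_sub_sub_eq_neg_of_forall_inner_sub_sub_eq_zero hv i₀)
  obtain ⟨ω, hω⟩ := exists_cross3_eq_of_inner_eq_neg A hA
  refine ⟨v i₀ - cross3 ω (x i₀), ω, fun i => ?_⟩
  have hi := hAx i
  rw [hω, cross3_sub] at hi
  linear_combination (norm := module) -hi
end

section
/- Let a, b, c, x be points of ℝ³ such that the four points x, a, b, c are affinely independent, and define F : ℝ³ → ℝ³ by F(p) = (dist p a, dist p b, dist p c). Then F is differentiable at x and the Fréchet derivative fderiv ℝ F x : ℝ³ → ℝ³ is a linear bijection. -/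
/-!
The derivative of `p ↦ dist p a` at `x ≠ a` is `v ↦ ⟪x - a, v⟫ / ‖x - a‖`, so the kernel of the
derivative of `p ↦ (dist p a, dist p b, dist p c)` is the orthogonal complement of
`span {x - a, x - b, x - c}`. Affine independence of `x, a, b, c` in a 3-dimensional space makes
these vectors span everything, so the derivative is injective, hence bijective by dimension count.
-/

open Module Submodule
open scoped RealInnerProductSpace

theorem AffineIndependent.span_vsub_succ_eq_top {k V P : Type*} [DivisionRing k] [AddCommGroup V]
    [Module k V] [AddTorsor V P] [FiniteDimensional k V] {n : ℕ} {p : Fin (n + 1) → P}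
    (hp : AffineIndependent k p) (hn : finrank k V = n) :
    span k (Set.range fun i : Fin n => p 0 -ᵥ p i.succ) = ⊤ := by
  have hspan := vectorSpan_range_eq_span_range_vsub_left k p 0
  rw [AffineSubspace.vectorSpan_eq_top_of_affineSpan_eq_top k V P
    (hp.affineSpan_eq_top_iff_card_eq_finrank_add_one.mpr (by simp [hn])), Fin.range_fin_succ,
    vsub_self, span_insert_zero] at hspan
  exact hspan.symm

section InnerProductSpace

variable {E : Type*} [NormedAddCommGroup E] [InnerProductSpace ℝ E]

theorem hasFDerivAt_dist_const {a x : E} (hx : x ≠ a) :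
    HasFDerivAt (dist · a) (‖x - a‖⁻¹ • innerSL ℝ (x - a)) x := by
  have hpos : 0 < ‖x - a‖ := norm_pos_iff.mpr (sub_ne_zero.mpr hx)
  have hdist : (dist · a) = fun p => √(‖p - a‖ ^ 2) := by
    funext p
    rw [Real.sqrt_sq (norm_nonneg _), dist_eq_norm]
  rw [hdist]
  refine ((Real.hasDerivAt_sqrt (by positivity)).comp_hasFDerivAt x
    ((hasFDerivAt_id x).sub_const a).norm_sq).congr_fderiv ?_
  ext v
  simp only [smul_apply, coe_innerSL_apply, smul_eq_mul, nsmul_eq_mul, Nat.cast_ofNat, id_eq,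
    Real.sqrt_sq hpos.le, ContinuousLinearMap.comp_id]
  field_simp

theorem ker_smul_innerSL {r : ℝ} (hr : r ≠ 0) (v : E) :
    LinearMap.ker ((r • innerSL ℝ v : E →L[ℝ] ℝ) : E →ₗ[ℝ] ℝ) = (ℝ ∙ v)ᗮ := by
  ext u
  simp [mem_orthogonal_singleton_iff_inner_right, hr]

theorem ker_smul_innerSL_prod {r s t : ℝ} (hr : r ≠ 0) (hs : s ≠ 0) (ht : t ≠ 0) (u v w : E) :
    LinearMap.ker ((r • innerSL ℝ u).prod ((s • innerSL ℝ v).prod (t • innerSL ℝ w)) :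
      E →ₗ[ℝ] ℝ × ℝ × ℝ) = (span ℝ {u, v, w})ᗮ := by
  rw [ContinuousLinearMap.ker_prod, ContinuousLinearMap.ker_prod, ker_smul_innerSL hr,
    ker_smul_innerSL hs, ker_smul_innerSL ht, inf_orthogonal, inf_orthogonal, span_insert,
    span_insert]

end InnerProductSpace

/-- For a point `x` forming an affinely independent quadruple with `a, b, c`
in Euclidean 3-space, the map `p ↦ (dist p a, dist p b, dist p c)` is
differentiable at `x` and its Fréchet derivative there is a linear bijection. -/
theorem distances_to_three_points_fderiv_bijective
    (a b c x : EuclideanSpace ℝ (Fin 3))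
    (h : AffineIndependent ℝ ![x, a, b, c]) :
    DifferentiableAt ℝ
      (fun p : EuclideanSpace ℝ (Fin 3) => ((dist p a, dist p b, dist p c) : ℝ × ℝ × ℝ)) x ∧
    Function.Bijective
      (fderiv ℝ
        (fun p : EuclideanSpace ℝ (Fin 3) => ((dist p a, dist p b, dist p c) : ℝ × ℝ × ℝ)) x) := by
  have hxa : x ≠ a := h.injective.ne (by decide : (0 : Fin 4) ≠ 1)
  have hxb : x ≠ b := h.injective.ne (by decide : (0 : Fin 4) ≠ 2)
  have hxc : x ≠ c := h.injective.ne (by decide : (0 : Fin 4) ≠ 3)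
  have hF := (hasFDerivAt_dist_const hxa).prodMk
    ((hasFDerivAt_dist_const hxb).prodMk (hasFDerivAt_dist_const hxc))
  have hspan : span ℝ {x - a, x - b, x - c} = ⊤ := by
    simpa [Fin.range_fin_succ, Fin.tail] using h.span_vsub_succ_eq_top (by simp)
  have hinv {p} (hp : x ≠ p) : ‖x - p‖⁻¹ ≠ 0 :=
    inv_ne_zero (norm_ne_zero_iff.mpr (sub_ne_zero.mpr hp))
  refine ⟨hF.differentiableAt, ?_⟩
  rw [hF.fderiv, ← ContinuousLinearMap.coe_coe]
  have hinj := LinearMap.ker_eq_bot.mp <|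
    (ker_smul_innerSL_prod (hinv hxa) (hinv hxb) (hinv hxc) _ _ _).trans
      (by rw [hspan, top_orthogonal_eq_bot])
  exact ⟨hinj, (LinearMap.injective_iff_surjective_of_finrank_eq_finrank (by simp)).mp hinj⟩
end
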